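/- arXiv:2101.09212 — 2 statements merged into one kernel-verified Lean document; each statement's English description precedes it below -/
import Mathlib

section
/- Let E be a locally free sheaf on an irreducible smooth scheme X with generic point ξ, and let W ⊆ E_ξ be an O_ξ-submodule. Then there exists a unique coherent subsheaf F ⊆ E such that F_ξ = W and the cokernel Q of F ↪ E is torsion-free; moreover F is reflexive. -/
/-!
Localizing at the nonzero divisors, `p ↦ p.localized' K R⁰ f` and `W ↦ E ∩ W` form a Galois
insertion between `R`-submodules of `E` and `K`-subspaces of `K ⊗[R] E`, and a submodule is
closed for it exactly when its quotient is torsion-free. So `E ∩ W` is the unique saturated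
submodule with generic fibre `W`.

For reflexivity of a saturated `F ⊆ E`, clearing denominators of `K`-linear functionals shows
that every functional on `F` extends to `E` after multiplication by some `s ≠ 0`, and that the
functionals on `E` vanishing on `F` cut out `F`. A point of `F**` restricts to a point of
`E** = E`, which lies in `F` by the second fact and represents the given point by the first.
-/

open TensorProduct
open Module Submodule nonZeroDivisors

section Saturation

variable {R K M V : Type*} [CommRing R] [Field K] [Algebra R K] [IsFractionRing R K]
  [AddCommGroup M] [Module R M] [AddCommGroup V] [Module R V] [Module K V] [IsScalarTower R K V]
  (f : M →ₗ[R] V)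

theorem Submodule.noZeroSMulDivisors_quotient_comap (W : Submodule K V) :
    NoZeroSMulDivisors R (M ⧸ (W.restrictScalars R).comap f) := by
  refine noZeroSMulDivisors_iff_right_eq_zero_of_smul.mpr fun r hr x hx => ?_
  obtain ⟨m, rfl⟩ := Submodule.Quotient.mk_surjective _ x
  have hr' : algebraMap R K r ≠ 0 := (map_ne_zero_iff _ (IsFractionRing.injective R K)).mpr hr
  rw [← Quotient.mk_smul, Quotient.mk_eq_zero, mem_comap, map_smul, restrictScalars_mem,
    ← algebraMap_smul K, smul_mem_iff _ hr'] at hx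
  exact (Quotient.mk_eq_zero _).mpr hx

variable [IsDomain R]

theorem Submodule.mem_of_smul_mem_of_noZeroSMulDivisors {p : Submodule R M}
    [NoZeroSMulDivisors R (M ⧸ p)] {r : R} (hr : r ≠ 0) {m : M} (h : r • m ∈ p) : m ∈ p := by
  rw [← Quotient.mk_eq_zero, ← smul_eq_zero_iff_right hr, ← Quotient.mk_smul,
    Quotient.mk_eq_zero]
  exact h

variable (K) in
theorem Submodule.comap_localized'_eq_self [IsLocalizedModule R⁰ f] (p : Submodule R M)
    [NoZeroSMulDivisors R (M ⧸ p)] :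
    ((p.localized' K R⁰ f).restrictScalars R).comap f = p := by
  refine le_antisymm (fun m hm => ?_) ((localized'gi K R⁰ f).gc.le_u_l p)
  obtain ⟨m', hm', s, hs⟩ := hm
  rw [← IsLocalizedModule.mk'_one R⁰ f m, IsLocalizedModule.mk'_eq_mk'_iff] at hs
  obtain ⟨c, hc⟩ := hs
  rw [one_smul, smul_smul] at hc
  refine mem_of_smul_mem_of_noZeroSMulDivisors (r := ((c * s : R⁰) : R))
    (nonZeroDivisors.coe_ne_zero _) ?_
  rw [← Submonoid.smul_def, hc]
  exact p.smul_of_tower_mem c hm'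

theorem Submodule.existsUnique_localized'_eq_and_noZeroSMulDivisors_quotient
    [IsLocalizedModule R⁰ f] (W : Submodule K V) :
    ∃! p : Submodule R M, p.localized' K R⁰ f = W ∧ NoZeroSMulDivisors R (M ⧸ p) := by
  refine ⟨(W.restrictScalars R).comap f,
    ⟨(localized'gi K R⁰ f).l_u_eq W, noZeroSMulDivisors_quotient_comap f W⟩, ?_⟩
  rintro p ⟨rfl, _⟩
  exact (comap_localized'_eq_self K f p).symm

end Saturation

section Reflexive

variable {R M : Type*} [CommRing R] [IsDomain R] [AddCommGroup M] [Module R M]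

theorem Submodule.exists_dual_comp_subtype_eq_smul [Module.FinitePresentation R M]
    (p : Submodule R M) (φ : Dual R p) :
    ∃ s ≠ (0 : R), ∃ ψ : Dual R M, ψ ∘ₗ p.subtype = s • φ := by
  let K := FractionRing R
  let f := TensorProduct.mk R K M 1
  let φK : p.localized' K R⁰ f →ₗ[K] K :=
    (IsLocalizedModule.map R⁰ (p.toLocalized' K R⁰ f) (Algebra.linearMap R K) φ)
      |>.extendScalarsOfIsLocalization R⁰ K
  obtain ⟨Ψ, hΨ⟩ := LinearMap.exists_extend φK
  obtain ⟨ψ, s, hψ⟩ := FinitePresentation.exists_lift_of_isLocalizedModule R⁰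
    (Algebra.linearMap R K) (Ψ.restrictScalars R ∘ₗ f)
  refine ⟨s, nonZeroDivisors.coe_ne_zero s, ψ,
    LinearMap.ext fun x => IsFractionRing.injective R K ?_⟩
  have hx : Ψ (f x) = algebraMap R K (φ x) := by
    trans φK (p.toLocalized' K R⁰ f x)
    · exact LinearMap.congr_fun hΨ (p.toLocalized' K R⁰ f x)
    · simp [φK, IsLocalizedModule.map_apply]
  have key : algebraMap R K (ψ x) = s • Ψ (f x) := by simpa using LinearMap.congr_fun hψ x
  simp [key, hx, Submonoid.smul_def, Algebra.smul_def]

theorem Submodule.exists_dual_comp_subtype_eq_zero_of_notMem [Module.FinitePresentation R M]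
    {p : Submodule R M} [NoZeroSMulDivisors R (M ⧸ p)] {x : M} (hx : x ∉ p) :
    ∃ ψ : Dual R M, ψ ∘ₗ p.subtype = 0 ∧ ψ x ≠ 0 := by
  let K := FractionRing R
  let f := TensorProduct.mk R K M 1
  have hfx : f x ∉ p.localized' K R⁰ f := by
    rwa [← comap_localized'_eq_self K f p] at hx
  obtain ⟨Ψ, hΨx, hΨp⟩ := exists_dual_map_eq_bot_of_notMem hfx inferInstance
  obtain ⟨ψ, s, hψ⟩ := FinitePresentation.exists_lift_of_isLocalizedModule R⁰
    (Algebra.linearMap R K) (Ψ.restrictScalars R ∘ₗ f)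
  have key (m : M) : algebraMap R K (ψ m) = s • Ψ (f m) := by
    simpa using LinearMap.congr_fun hψ m
  refine ⟨ψ, LinearMap.ext fun m => IsFractionRing.injective R K ?_, fun h => ?_⟩
  · have : Ψ (f m) = 0 := by
      rw [← mem_bot K, ← hΨp]
      exact mem_map_of_mem ⟨m, m.2, 1, by simp⟩
    simp [key, this]
  · have := key x
    rw [h, map_zero, eq_comm, Submonoid.smul_def, smul_eq_zero] at this
    exact this.elim (nonZeroDivisors.coe_ne_zero s) hΨx

theorem Submodule.isReflexive_of_noZeroSMulDivisors_quotient [Module.Finite R M]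
    [Module.Projective R M] (p : Submodule R M) [NoZeroSMulDivisors R (M ⧸ p)] :
    IsReflexive R p := by
  have := Module.finitePresentation_of_projective R M
  refine ⟨⟨fun x y hxy => Subtype.ext <| eval_apply_injective R <| LinearMap.ext fun ψ =>
    LinearMap.congr_fun hxy (ψ ∘ₗ p.subtype), fun Φ => ?_⟩⟩
  set e := (evalEquiv R M).symm (Φ ∘ₗ p.subtype.dualMap)
  have he (ψ : Dual R M) : ψ e = Φ (ψ ∘ₗ p.subtype) := apply_evalEquiv_symm_apply ..
  have hep : e ∈ p := by
    by_contra hep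
    obtain ⟨ψ, hψp, hψe⟩ := exists_dual_comp_subtype_eq_zero_of_notMem hep
    exact hψe (by rw [he, hψp, map_zero])
  refine ⟨⟨e, hep⟩, LinearMap.ext fun φ => ?_⟩
  obtain ⟨s, hs, ψ, hψ⟩ := p.exists_dual_comp_subtype_eq_smul φ
  refine mul_left_cancel₀ hs ?_
  calc s * φ ⟨e, hep⟩ = (ψ ∘ₗ p.subtype) ⟨e, hep⟩ := by rw [hψ]; rfl
    _ = s * Φ φ := by rw [LinearMap.comp_apply, subtype_apply, he, hψ, map_smul, smul_eq_mul]

end Reflexive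

theorem stmt0_general (R K : Type*) [CommRing R] [IsDomain R]
    [Field K] [Algebra R K] [IsFractionRing R K]
    (E : Type*) [AddCommGroup E] [Module R E] [Module.Free R E] [Module.Finite R E]
    (W : Submodule K (K ⊗[R] E)) :
    (∃! F : Submodule R E,
        Submodule.span K (⇑(TensorProduct.mk R K E 1) '' (F : Set E)) = W ∧
        NoZeroSMulDivisors R (E ⧸ F)) ∧
    (∀ F : Submodule R E,
        Submodule.span K (⇑(TensorProduct.mk R K E 1) '' (F : Set E)) = W →
        NoZeroSMulDivisors R (E ⧸ F) → Module.IsReflexive R F) := by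
  simp_rw [← localized'_eq_span K R⁰ (TensorProduct.mk R K E 1)]
  exact ⟨existsUnique_localized'_eq_and_noZeroSMulDivisors_quotient _ W,
    fun F _ _ => F.isReflexive_of_noZeroSMulDivisors_quotient⟩

/-- (Affine model of Lemma `langton`.)  Let `X` be an irreducible smooth scheme, `E` a
locally free sheaf on `X`, `ξ` the generic point and `W ⊆ E_ξ` an `O_ξ`-submodule.  In the
affine model, `X = Spec R` for a Noetherian normal domain `R` (smooth implies normal),
`O_ξ = K` is the fraction field, `E` is a finite free `R`-module and `E_ξ = K ⊗_R E`.
There is a unique coherent subsheaf `F ⊆ E` with `F_ξ = W` (i.e. the `K`-span of the image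
of `F` in `K ⊗_R E` is `W`) such that the cokernel `E/F` is torsion-free; moreover any such
`F` is reflexive. -/
theorem stmt0 (R K : Type*) [CommRing R] [IsDomain R] [IsNoetherianRing R]
    [IsIntegrallyClosed R] [Field K] [Algebra R K] [IsFractionRing R K]
    (E : Type*) [AddCommGroup E] [Module R E] [Module.Free R E] [Module.Finite R E]
    (W : Submodule K (K ⊗[R] E)) :
    (∃! F : Submodule R E,
        Submodule.span K (⇑(TensorProduct.mk R K E 1) '' (F : Set E)) = W ∧
        NoZeroSMulDivisors R (E ⧸ F)) ∧
    (∀ F : Submodule R E,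
        Submodule.span K (⇑(TensorProduct.mk R K E 1) '' (F : Set E)) = W →
        NoZeroSMulDivisors R (E ⧸ F) → Module.IsReflexive R F) :=
  stmt0_general R K E W
end

section
/- The reflexive sheaf R defined by R(B_0^+) = j(𝔤(B_0)) ∩ 𝔤(B^+) on Y_0 = Spec(B_0^+) ≅ 𝔸^ℓ is locally free of rank dim 𝔤, and carries a Lie bracket induced from 𝔤(B) extending the trivial Lie algebra bundle 𝔤 × T_ad over the open torus. -/
/-!
Decompose `𝔤 = ⨁ 𝔤_a` into `T_ad`-weight spaces and let `r a ∈ [0, N)^S` be the residue of `a`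
modulo `N`. The monomials `y^m` with `m ≥ 0` and `m ≡ a (mod N)` are exactly `y^{r a} · 𝔯(x^d)`,
so `R = Ψ(B₀⁺ ⊗ 𝔤)` for the `B`-linear automorphism `Ψ` of `𝔤(B)` multiplying `𝔤_a` by
`y^{r a}`. As `𝔯` is injective and `Ψ` invertible, `R ≅ B₀⁺ ⊗ 𝔤` is free of rank `dim 𝔤`. The
generators are closed under the bracket because weights and exponents both add, and over the
torus `y^{-r a}` undoes the twist.
-/

open scoped TensorProduct

namespace DirectSum.IsInternal

variable {ι R M : Type*} [DecidableEq ι] [Semiring R] [AddCommMonoid M] [Module R M]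
  {A : ι → Submodule R M}

theorem induction_on (h : IsInternal A) {motive : M → Prop} (x : M) (zero : motive 0)
    (add : ∀ x y, motive x → motive y → motive (x + y)) (mem : ∀ i, ∀ x ∈ A i, motive x) :
    motive x :=
  Submodule.iSup_induction A (motive := motive) (h.submodule_iSup_eq_top ▸ Submodule.mem_top)
    mem zero add

end DirectSum.IsInternal

theorem lie_mem_span_of_lie_mem {R A 𝔏 : Type*} [CommRing R] [CommRing A] [LieRing 𝔏]
    [LieAlgebra A 𝔏] [Module R 𝔏] (f : R →+* A) (hf : ∀ (r : R) (x : 𝔏), r • x = f r • x)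
    {X : Set 𝔏} (hX : ∀ x ∈ X, ∀ y ∈ X, ⁅x, y⁆ ∈ X) {x y : 𝔏} (hx : x ∈ Submodule.span R X)
    (hy : y ∈ Submodule.span R X) : ⁅x, y⁆ ∈ Submodule.span R X := by
  let bracket : 𝔏 →ₗ[R] 𝔏 →ₗ[R] 𝔏 := LinearMap.mk₂ R (⁅·, ·⁆) add_lie
    (fun r x y => by rw [hf, hf, smul_lie]) lie_add (fun r x y => by rw [hf, hf, lie_smul])
  have hmem := Submodule.apply_mem_map₂ bracket hx hy
  rw [Submodule.map₂_span_span] at hmem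
  refine Submodule.span_le.mpr ?_ hmem
  rintro _ ⟨x, hx, y, hy, rfl⟩
  exact Submodule.subset_span (hX x hx y hy)

section WeightTwist

open AddMonoidAlgebra

variable {ι k M G : Type*} [DecidableEq ι] [CommRing k] [AddCommGroup M] [Module k M]
  {gw : ι → Submodule k M}

noncomputable def weightShift (h : DirectSum.IsInternal gw) (c : ι → G) : M →ₗ[k] k[G] ⊗[k] M :=
  DirectSum.toModule k ι _
      (fun a => (TensorProduct.mk k k[G] M (single (c a) 1)).comp (gw a).subtype) ∘ₗ
    (LinearEquiv.ofBijective (DirectSum.coeLinearMap gw) h).symm.toLinearMap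

theorem weightShift_of_mem (h : DirectSum.IsInternal gw) (c : ι → G) {a : ι} {x : M}
    (hx : x ∈ gw a) : weightShift h c x = single (c a) 1 ⊗ₜ x := by
  have hdecomp : (LinearEquiv.ofBijective (DirectSum.coeLinearMap gw) h).symm x =
      DirectSum.lof k ι (fun a => gw a) a ⟨x, hx⟩ := by
    rw [LinearEquiv.symm_apply_eq, DirectSum.lof_eq_of]
    exact (DirectSum.coeLinearMap_of (R := k) (A := gw) a ⟨x, hx⟩).symm
  rw [weightShift, LinearMap.comp_apply, LinearEquiv.coe_coe, hdecomp, DirectSum.toModule_lof]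
  rfl

noncomputable def weightTwist [AddCommMonoid G] (h : DirectSum.IsInternal gw) (c : ι → G) :
    k[G] ⊗[k] M →ₗ[k[G]] k[G] ⊗[k] M :=
  (weightShift h c).liftBaseChange k[G]

theorem weightTwist_tmul [AddCommMonoid G] (h : DirectSum.IsInternal gw) (c : ι → G) (l : k[G])
    {a : ι} {x : M} (hx : x ∈ gw a) : weightTwist h c (l ⊗ₜ x) = (l * single (c a) 1) ⊗ₜ x := by
  rw [weightTwist, LinearMap.liftBaseChange_tmul, weightShift_of_mem h c hx,
    TensorProduct.smul_tmul', smul_eq_mul]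

theorem leftInverse_weightTwist_neg [AddCommGroup G] (h : DirectSum.IsInternal gw) (c : ι → G) :
    Function.LeftInverse (weightTwist h (-c)) (weightTwist h c) := by
  intro v
  induction v using TensorProduct.induction_on with
  | zero => simp only [map_zero]
  | add u w hu hw => rw [map_add, map_add, hu, hw]
  | tmul l x =>
    refine h.induction_on
      (motive := fun x => weightTwist h (-c) (weightTwist h c (l ⊗ₜ x)) = l ⊗ₜ x) x
      (by simp only [TensorProduct.tmul_zero, map_zero]) ?_ ?_
    · intro x y hx hy
      simp only [TensorProduct.tmul_add, map_add, hx, hy]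
    · intro a x hx
      rw [weightTwist_tmul h c l hx, weightTwist_tmul h (-c) _ hx, mul_assoc, single_mul_single,
        mul_one, Pi.neg_apply, add_neg_cancel, ← one_def, mul_one]

end WeightTwist

theorem Int.nonneg_and_dvd_sub_iff {n : ℤ} (hn : 0 < n) {m a : ℤ} :
    0 ≤ m ∧ n ∣ m - a ↔ ∃ d : ℕ, m = n * d + a % n := by
  constructor
  · rintro ⟨hm, hdvd⟩
    have hmod : m % n = a % n := (Int.modEq_iff_dvd.mpr hdvd).symm
    refine ⟨(m / n).toNat, ?_⟩
    rw [Int.toNat_of_nonneg (Int.ediv_nonneg hm hn.le), ← hmod, Int.mul_ediv_add_emod]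
  · rintro ⟨d, rfl⟩
    refine ⟨add_nonneg (by positivity) (Int.emod_nonneg a hn.ne'), ?_⟩
    rw [show n * d + a % n - a = n * (d - a / n) by rw [Int.emod_def]; ring]
    exact dvd_mul_right n _

section Roots

open AddMonoidAlgebra

variable (k : Type*) [CommRing k] {S : Type*} [DecidableEq S] (N : S → ℕ)

noncomputable def rootsHom : MvPolynomial S k →ₐ[k] k[S → ℤ] :=
  MvPolynomial.aeval fun α => single (fun β => if β = α then (N α : ℤ) else 0) 1

def scaleExponents : (S →₀ ℕ) →+ (S → ℤ) where
  toFun d β := N β * d β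
  map_zero' := by ext; simp
  map_add' d d' := by ext; simp [mul_add]

theorem rootsHom_eq_mapDomainAlgHom :
    rootsHom k N = mapDomainAlgHom k k (scaleExponents N) := by
  refine MvPolynomial.algHom_ext fun α => ?_
  rw [rootsHom, MvPolynomial.aeval_X, MvPolynomial.X, ← MvPolynomial.single_eq_monomial,
    mapDomainAlgHom_apply, mapDomain_single]
  congr 1
  ext β
  by_cases hβ : β = α <;> simp [scaleExponents, hβ]

theorem rootsHom_monomial (d : S →₀ ℕ) (c : k) :
    rootsHom k N (MvPolynomial.monomial d c) = single (scaleExponents N d) c := by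
  rw [rootsHom_eq_mapDomainAlgHom, ← MvPolynomial.single_eq_monomial, mapDomainAlgHom_apply,
    mapDomain_single]

variable {k N} in
theorem rootsHom_injective (hN : ∀ α, N α ≠ 0) : Function.Injective (rootsHom k N) := by
  rw [rootsHom_eq_mapDomainAlgHom]
  refine mapDomain_injective fun d d' hdd' => Finsupp.ext fun α => ?_
  exact_mod_cast by simpa [scaleExponents, hN α] using congr_fun hdd' α

end Roots

section Residue

variable {S : Type*} (N : S → ℕ)

def residue (a : S → ℤ) : S → ℤ := fun α => a α % N α

variable {N}

theorem nonneg_and_dvd_sub_iff_exists_scaleExponents [Finite S] (hN : ∀ α, 0 < N α)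
    {m a : S → ℤ} :
    ((∀ α, 0 ≤ m α) ∧ ∀ α, (N α : ℤ) ∣ m α - a α) ↔
      ∃ d : S →₀ ℕ, m = scaleExponents N d + residue N a := by
  have hN' : ∀ α, (0 : ℤ) < N α := fun α => by exact_mod_cast hN α
  constructor
  · rintro ⟨hm, hdvd⟩
    choose d hd using fun α => (Int.nonneg_and_dvd_sub_iff (hN' α)).mp ⟨hm α, hdvd α⟩
    exact ⟨Finsupp.equivFunOnFinite.symm d, funext hd⟩
  · rintro ⟨d, rfl⟩
    exact forall_and.mp fun α => (Int.nonneg_and_dvd_sub_iff (hN' α)).mpr ⟨d α, rfl⟩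

end Residue

section Lattice

open AddMonoidAlgebra

variable {k S 𝔤 : Type*} [CommRing k] [LieRing 𝔤] [LieAlgebra k 𝔤]
  (N : S → ℕ) (gw : (S → ℤ) → Submodule k 𝔤)

def latticeGenerators : Set (k[S → ℤ] ⊗[k] 𝔤) :=
  {t | ∃ (m a : S → ℤ) (x : 𝔤), x ∈ gw a ∧ (∀ α, 0 ≤ m α) ∧
    (∀ α, (N α : ℤ) ∣ (m α - a α)) ∧ t = single m (1 : k) ⊗ₜ[k] x}

variable {N gw}

theorem mem_latticeGenerators_iff [Finite S] (hN : ∀ α, 0 < N α) {t : k[S → ℤ] ⊗[k] 𝔤} :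
    t ∈ latticeGenerators N gw ↔ ∃ (d : S →₀ ℕ) (a : S → ℤ) (x : 𝔤), x ∈ gw a ∧
      t = single (scaleExponents N d + residue N a) 1 ⊗ₜ[k] x := by
  constructor
  · rintro ⟨m, a, x, hx, hm, hdvd, rfl⟩
    obtain ⟨d, rfl⟩ := (nonneg_and_dvd_sub_iff_exists_scaleExponents hN).mp ⟨hm, hdvd⟩
    exact ⟨d, a, x, hx, rfl⟩
  · rintro ⟨d, a, x, hx, rfl⟩
    obtain ⟨hm, hdvd⟩ := (nonneg_and_dvd_sub_iff_exists_scaleExponents hN).mpr ⟨d, rfl⟩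
    exact ⟨_, a, x, hx, hm, hdvd, rfl⟩

theorem lie_mem_latticeGenerators
    (hbr : ∀ (a b : S → ℤ) (x y : 𝔤), x ∈ gw a → y ∈ gw b → ⁅x, y⁆ ∈ gw (a + b))
    {t t' : k[S → ℤ] ⊗[k] 𝔤} (ht : t ∈ latticeGenerators N gw)
    (ht' : t' ∈ latticeGenerators N gw) : ⁅t, t'⁆ ∈ latticeGenerators N gw := by
  obtain ⟨m, a, x, hx, hm, hdvd, rfl⟩ := ht
  obtain ⟨m', b, y, hy, hm', hdvd', rfl⟩ := ht'
  rw [LieAlgebra.ExtendScalars.bracket_tmul, single_mul_single, mul_one]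
  refine ⟨m + m', a + b, ⁅x, y⁆, hbr a b x y hx hy, fun α => add_nonneg (hm α) (hm' α),
    fun α => ?_, rfl⟩
  simpa only [Pi.add_apply, add_sub_add_comm] using dvd_add (hdvd α) (hdvd' α)

theorem single_residue_tmul_mem_latticeGenerators [Finite S] (hN : ∀ α, 0 < N α) {a : S → ℤ}
    {x : 𝔤} (hx : x ∈ gw a) : single (residue N a) (1 : k) ⊗ₜ[k] x ∈ latticeGenerators N gw :=
  (mem_latticeGenerators_iff hN).mpr ⟨0, a, x, hx, by rw [map_zero, zero_add]⟩

theorem span_latticeGenerators_eq_top [Fintype S] [DecidableEq S] (hN : ∀ α, 0 < N α)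
    (h : DirectSum.IsInternal gw) :
    Submodule.span k[S → ℤ] (latticeGenerators N gw) = ⊤ := by
  set V := Submodule.span k[S → ℤ] (latticeGenerators N gw)
  have one_tmul_mem (x : 𝔤) : (1 : k[S → ℤ]) ⊗ₜ[k] x ∈ V := by
    refine h.induction_on (motive := fun x => (1 : k[S → ℤ]) ⊗ₜ[k] x ∈ V) x
      (by simp only [TensorProduct.tmul_zero, zero_mem]) (fun _ _ => by
        simpa only [TensorProduct.tmul_add] using add_mem) fun a x hx => ?_
    have hmem := V.smul_mem (single (-residue N a) 1)
      (Submodule.subset_span (single_residue_tmul_mem_latticeGenerators hN hx))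
    rwa [TensorProduct.smul_tmul', smul_eq_mul, single_mul_single, mul_one, neg_add_cancel,
      ← one_def] at hmem
  rw [eq_top_iff]
  rintro v -
  induction v using TensorProduct.induction_on with
  | zero => exact zero_mem V
  | add u w hu hw => exact add_mem hu hw
  | tmul l x => simpa only [TensorProduct.smul_tmul', smul_eq_mul, mul_one] using
      V.smul_mem l (one_tmul_mem x)

/- An `Algebra (MvPolynomial S k) k[S → ℤ]` instance would put a second scalar action on
`k[S → ℤ] ⊗[k] 𝔤` (through `TensorProduct.leftHasSMul`), so the action of `B₀⁺` through `𝔯` is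
recorded by the hypothesis `hsmul` instead. -/
theorem lie_mem_span_latticeGenerators [DecidableEq S]
    [Module (MvPolynomial S k) (k[S → ℤ] ⊗[k] 𝔤)]
    (hbr : ∀ (a b : S → ℤ) (x y : 𝔤), x ∈ gw a → y ∈ gw b → ⁅x, y⁆ ∈ gw (a + b))
    (hsmul : ∀ (p : MvPolynomial S k) (v : k[S → ℤ] ⊗[k] 𝔤), p • v = rootsHom k N p • v)
    {u v : k[S → ℤ] ⊗[k] 𝔤}
    (hu : u ∈ Submodule.span (MvPolynomial S k) (latticeGenerators N gw))
    (hv : v ∈ Submodule.span (MvPolynomial S k) (latticeGenerators N gw)) :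
    ⁅u, v⁆ ∈ Submodule.span (MvPolynomial S k) (latticeGenerators N gw) :=
  lie_mem_span_of_lie_mem (rootsHom k N).toRingHom hsmul
    (fun _ ht _ ht' => lie_mem_latticeGenerators hbr ht ht') hu hv

end Lattice

section LatticeOverPolynomials

open AddMonoidAlgebra

variable {k S 𝔤 : Type*} [Field k] [Fintype S] [DecidableEq S] [LieRing 𝔤] [LieAlgebra k 𝔤]
  {N : S → ℕ} {gw : (S → ℤ) → Submodule k 𝔤}

variable (N) in
noncomputable def latticeEmbedding [Module (MvPolynomial S k) (k[S → ℤ] ⊗[k] 𝔤)]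
    [IsScalarTower k (MvPolynomial S k) (k[S → ℤ] ⊗[k] 𝔤)] (h : DirectSum.IsInternal gw) :
    MvPolynomial S k ⊗[k] 𝔤 →ₗ[MvPolynomial S k] k[S → ℤ] ⊗[k] 𝔤 :=
  (weightShift h (residue N)).liftBaseChange _

variable [Module (MvPolynomial S k) (k[S → ℤ] ⊗[k] 𝔤)]
  [IsScalarTower k (MvPolynomial S k) (k[S → ℤ] ⊗[k] 𝔤)]

theorem latticeEmbedding_eq_weightTwist_comp (h : DirectSum.IsInternal gw)
    (hsmul : ∀ (p : MvPolynomial S k) (v : k[S → ℤ] ⊗[k] 𝔤), p • v = rootsHom k N p • v) :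
    ⇑(latticeEmbedding N h) =
      weightTwist h (residue N) ∘ (rootsHom k N).toLinearMap.rTensor 𝔤 := by
  ext v
  induction v using TensorProduct.induction_on with
  | zero => simp only [map_zero, Function.comp_apply]
  | add u w hu hw => simp only [map_add, Function.comp_apply] at hu hw ⊢; rw [hu, hw]
  | tmul p x =>
    rw [Function.comp_apply, LinearMap.rTensor_tmul, latticeEmbedding, weightTwist,
      LinearMap.liftBaseChange_tmul, LinearMap.liftBaseChange_tmul, hsmul]
    rfl

theorem injective_latticeEmbedding (hN : ∀ α, 0 < N α) (h : DirectSum.IsInternal gw)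
    (hsmul : ∀ (p : MvPolynomial S k) (v : k[S → ℤ] ⊗[k] 𝔤), p • v = rootsHom k N p • v) :
    Function.Injective (latticeEmbedding N h) := by
  rw [latticeEmbedding_eq_weightTwist_comp h hsmul]
  exact (leftInverse_weightTwist_neg h _).injective.comp
    (Module.Flat.rTensor_preserves_injective_linearMap _ (rootsHom_injective fun α => (hN α).ne'))

theorem range_latticeEmbedding (hN : ∀ α, 0 < N α) (h : DirectSum.IsInternal gw)
    (hsmul : ∀ (p : MvPolynomial S k) (v : k[S → ℤ] ⊗[k] 𝔤), p • v = rootsHom k N p • v) :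
    LinearMap.range (latticeEmbedding N h) =
      Submodule.span (MvPolynomial S k) (latticeGenerators N gw) := by
  apply le_antisymm
  · rw [latticeEmbedding, LinearMap.range_liftBaseChange, Submodule.span_le]
    rintro _ ⟨x, rfl⟩
    rw [SetLike.mem_coe]
    refine h.induction_on (motive := fun x => weightShift h (residue N) x ∈ _) x
      (by simp only [map_zero, zero_mem]) (fun _ _ => by simpa only [map_add] using add_mem) ?_
    intro a x hx
    rw [weightShift_of_mem h _ hx]
    exact Submodule.subset_span (single_residue_tmul_mem_latticeGenerators hN hx)
  · rw [Submodule.span_le]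
    intro t ht
    obtain ⟨d, a, x, hx, rfl⟩ := (mem_latticeGenerators_iff hN).mp ht
    refine ⟨MvPolynomial.monomial d 1 ⊗ₜ x, ?_⟩
    rw [latticeEmbedding_eq_weightTwist_comp h hsmul, Function.comp_apply, LinearMap.rTensor_tmul,
      AlgHom.toLinearMap_apply, rootsHom_monomial, weightTwist_tmul h _ _ hx, single_mul_single,
      mul_one]

theorem nonempty_span_latticeGenerators_equiv_pi [FiniteDimensional k 𝔤]
    (hN : ∀ α, 0 < N α) (h : DirectSum.IsInternal gw)
    (hsmul : ∀ (p : MvPolynomial S k) (v : k[S → ℤ] ⊗[k] 𝔤), p • v = rootsHom k N p • v) :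
    Nonempty (Submodule.span (MvPolynomial S k) (latticeGenerators N gw) ≃ₗ[MvPolynomial S k]
      (Fin (Module.finrank k 𝔤) → MvPolynomial S k)) :=
  ⟨(LinearEquiv.ofEq _ _ (range_latticeEmbedding hN h hsmul)).symm ≪≫ₗ
    (LinearEquiv.ofInjective _ (injective_latticeEmbedding hN h hsmul)).symm ≪≫ₗ
    ((Module.finBasis k 𝔤).baseChange _).equivFun⟩

end LatticeOverPolynomials

theorem stmt14_general (k : Type) [Field k] (S : Type) [Fintype S] [DecidableEq S]
    (N : S → ℕ) (hN : ∀ α, 0 < N α)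
    (𝔤 : Type) [LieRing 𝔤] [LieAlgebra k 𝔤] [FiniteDimensional k 𝔤]
    (gw : (S → ℤ) → Submodule k 𝔤)
    (hdirect : DirectSum.IsInternal gw)
    (hbr : ∀ (a b : S → ℤ) (x y : 𝔤), x ∈ gw a → y ∈ gw b → ⁅x, y⁆ ∈ gw (a + b)) :
    let L := AddMonoidAlgebra k (S → ℤ)
    let P := MvPolynomial S k
    let φ : P →+* L := (MvPolynomial.aeval (R := k)
      (fun α => AddMonoidAlgebra.single (fun β => if β = α then (N α : ℤ) else 0)
        (1 : k))).toRingHom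
    letI : Module P (L ⊗[k] 𝔤) := Module.compHom (L ⊗[k] 𝔤) φ
    let RR : Submodule P (L ⊗[k] 𝔤) := Submodule.span P
      {t : L ⊗[k] 𝔤 | ∃ (m a : S → ℤ) (x : 𝔤), x ∈ gw a ∧ (∀ α, 0 ≤ m α) ∧
        (∀ α, (N α : ℤ) ∣ (m α - a α)) ∧ t = (AddMonoidAlgebra.single m (1 : k)) ⊗ₜ[k] x}
    -- `RR` is free (locally free) of rank `dim 𝔤` over `B₀⁺`:
    Nonempty (↥RR ≃ₗ[P] (Fin (Module.finrank k 𝔤) → P)) ∧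
    -- `RR` is closed under the Lie bracket of `𝔤(B)` induced from `𝔤`:
    (∀ x y : L ⊗[k] 𝔤, x ∈ RR → y ∈ RR → ⁅x, y⁆ ∈ RR) ∧
    -- `RR` extends the trivial Lie algebra bundle over the torus:
    Submodule.span L (RR : Set (L ⊗[k] 𝔤)) = ⊤ := by
  intro L P φ RR
  let _ : Module P (L ⊗[k] 𝔤) := Module.compHom (L ⊗[k] 𝔤) φ
  have hsmul (p : P) (v : L ⊗[k] 𝔤) : p • v = rootsHom k N p • v := rfl
  have : IsScalarTower k P (L ⊗[k] 𝔤) :=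
    ⟨fun c p v => by rw [hsmul, hsmul, map_smul, smul_assoc]⟩
  refine ⟨nonempty_span_latticeGenerators_equiv_pi hN hdirect hsmul,
    fun _ _ => lie_mem_span_latticeGenerators hbr hsmul, top_le_iff.mp ?_⟩
  rw [← span_latticeGenerators_eq_top hN hdirect]
  exact Submodule.span_mono Submodule.subset_span

/-- The sheaf `R` on `Y₀ = Spec(B₀⁺) ≅ 𝔸^ℓ` defined by `R(B₀⁺) = j(𝔤(B₀)) ∩ 𝔤(B⁺)` is
locally free of rank `dim 𝔤` and carries a Lie bracket induced from `𝔤(B)` extending the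
trivial Lie algebra bundle `𝔤 × T_ad` over the open torus.  Model: `B = k[y_α^{±1}]` is the
monoid algebra `L` of `S → ℤ`, `B₀⁺ = k[x_α] = P` maps to `L` by `x_α ↦ y_α^{N_α}`, and the
twist `j = Ad ∘ 𝔯` is encoded by a `T_ad`-weight decomposition of `𝔤` into submodules
`gw a`, `a : S → ℤ` (an internal direct sum compatible with the bracket).  The submodule
`RR ⊆ B ⊗ 𝔤 = 𝔤(B)` spanned over `P` by the elements `y^m ⊗ x` with `x ∈ gw a`, `m ≥ 0`
and `m ≡ a (mod N)` is free of rank `dim 𝔤` over `P`, is closed under the Lie bracket of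
`𝔤(B)`, and spans `𝔤(B)` over `B` (i.e. restricts to the trivial bundle on the torus). -/
theorem stmt14 (k : Type) [Field k] (S : Type) [Fintype S] [DecidableEq S]
    (N : S → ℕ) (hN : ∀ α, 0 < N α)
    (𝔤 : Type) [LieRing 𝔤] [LieAlgebra k 𝔤] [FiniteDimensional k 𝔤]
    (gw : (S → ℤ) → Submodule k 𝔤)
    (hdirect : DirectSum.IsInternal gw)
    (hfin : (Function.support gw).Finite)
    (hbr : ∀ (a b : S → ℤ) (x y : 𝔤), x ∈ gw a → y ∈ gw b → ⁅x, y⁆ ∈ gw (a + b)) :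
    let L := AddMonoidAlgebra k (S → ℤ)
    let P := MvPolynomial S k
    let φ : P →+* L := (MvPolynomial.aeval (R := k)
      (fun α => AddMonoidAlgebra.single (fun β => if β = α then (N α : ℤ) else 0)
        (1 : k))).toRingHom
    letI : Module P (L ⊗[k] 𝔤) := Module.compHom (L ⊗[k] 𝔤) φ
    let RR : Submodule P (L ⊗[k] 𝔤) := Submodule.span P
      {t : L ⊗[k] 𝔤 | ∃ (m a : S → ℤ) (x : 𝔤), x ∈ gw a ∧ (∀ α, 0 ≤ m α) ∧
        (∀ α, (N α : ℤ) ∣ (m α - a α)) ∧ t = (AddMonoidAlgebra.single m (1 : k)) ⊗ₜ[k] x}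
    -- `RR` is free (locally free) of rank `dim 𝔤` over `B₀⁺`:
    Nonempty (↥RR ≃ₗ[P] (Fin (Module.finrank k 𝔤) → P)) ∧
    -- `RR` is closed under the Lie bracket of `𝔤(B)` induced from `𝔤`:
    (∀ x y : L ⊗[k] 𝔤, x ∈ RR → y ∈ RR → ⁅x, y⁆ ∈ RR) ∧
    -- `RR` extends the trivial Lie algebra bundle over the torus:
    Submodule.span L (RR : Set (L ⊗[k] 𝔤)) = ⊤ :=
  stmt14_general k S N hN 𝔤 gw hdirect hbr
end
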